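/- arXiv:2310.16403 — 2 statements merged into one kernel-verified Lean document; each statement's English description precedes it below -/
import Mathlib

section
/- Let X be a δ-hyperbolic geodesic metric space and let α be a (λ,ε)-quasigeodesic in X. If p₂, p₃ are points of X within distance δ of a common point z, and q₂, q₃ are nearest-point projections of p₂, p₃ respectively onto the image of α, then the distance in X between q₂ and q₃ is bounded by a constant depending only on δ, λ, and ε. -/
/-- A parametrized geodesic on the interval `[a, b]`. -/
def IsGeodesicParam {X : Type*} [MetricSpace X] (γ : ℝ → X) (a b : ℝ) : Prop :=
  ∀ s ∈ Set.Icc a b, ∀ t ∈ Set.Icc a b, dist (γ s) (γ t) = |s - t|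

/-- A geodesic metric space: any two points are joined by a geodesic. -/
def GeodesicSpace (X : Type*) [MetricSpace X] : Prop :=
  ∀ x y : X, ∃ γ : ℝ → X, γ 0 = x ∧ γ (dist x y) = y ∧ IsGeodesicParam γ 0 (dist x y)

/-- Gromov hyperbolicity via the four-point condition. -/
def GromovHyperbolic (X : Type*) [MetricSpace X] (δ : ℝ) : Prop :=
  ∀ x y z w : X,
    dist x z + dist y w ≤ max (dist x y + dist z w) (dist x w + dist y z) + 2 * δ

/-- A `(l, ε)`-quasigeodesic on `[a, b]`. -/
def IsQuasiGeodesic {X : Type*} [MetricSpace X] (l ε : ℝ) (γ : ℝ → X) (a b : ℝ) : Prop :=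
  ∀ s ∈ Set.Icc a b, ∀ t ∈ Set.Icc a b,
    (1 / l) * |s - t| - ε ≤ dist (γ s) (γ t) ∧ dist (γ s) (γ t) ≤ l * |s - t| + ε

lemma sqrt_bound {A B D : ℝ} (hA : 0 ≤ A) (hB : 0 ≤ B) (hD : 0 ≤ D)
    (h : D ≤ A + B * Real.sqrt (D + 1)) : D ≤ (B + Real.sqrt (A + 1)) ^ 2 := by
  set u := Real.sqrt (D + 1) with hu
  have hu0 : 0 ≤ u := Real.sqrt_nonneg _
  have hu2 : u ^ 2 = D + 1 := Real.sq_sqrt (by linarith)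
  have hA1 : Real.sqrt (A + 1) ^ 2 = A + 1 := Real.sq_sqrt (by linarith)
  have hA10 : 0 ≤ Real.sqrt (A + 1) := Real.sqrt_nonneg _
  have hub : u ≤ B + Real.sqrt (A + 1) := by
    by_contra hcon
    push_neg at hcon
    nlinarith
  nlinarith

lemma clog_real_bound (N : ℕ) (hN : 1 ≤ N) :
    (Nat.clog 2 N : ℝ) ≤ 2 * Real.sqrt N / Real.log 2 + 1 := by
  have hlog2 : 0 < Real.log 2 := Real.log_pos (by norm_num)
  have hsq : 0 ≤ Real.sqrt N := Real.sqrt_nonneg _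
  rcases Nat.eq_zero_or_pos (Nat.clog 2 N) with h0 | hk
  · rw [h0]
    push_cast
    positivity
  · have hN2 : 2 ≤ N := by
      by_contra hcon
      interval_cases N
      have h1 := Nat.clog_one_right 2
      omega
    have hpow := Nat.pow_pred_clog_lt_self (b := 2) (by norm_num) (x := N) hN2
    set k := Nat.clog 2 N with hkdef
    have hcast : ((2:ℝ)) ^ (k - 1) < (N : ℝ) := by
      exact_mod_cast hpow
    have hlog : ((k - 1 : ℕ) : ℝ) * Real.log 2 ≤ Real.log N := by
      have := Real.log_le_log (by positivity) hcast.le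
      rwa [Real.log_pow] at this
    have hlogN : Real.log N ≤ 2 * Real.sqrt N := by
      have h1 : Real.log (Real.sqrt N) ≤ Real.sqrt N - 1 :=
        Real.log_le_sub_one_of_pos
          (Real.sqrt_pos.mpr (by exact_mod_cast Nat.lt_of_lt_of_le Nat.zero_lt_one hN))
      have h2 : Real.log (Real.sqrt N) = Real.log N / 2 := Real.log_sqrt (by positivity)
      linarith
    have hkc : ((k - 1 : ℕ) : ℝ) = (k : ℝ) - 1 := by
      have : 1 ≤ k := hk
      push_cast [Nat.cast_sub this]
      ring
    rw [hkc] at hlog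
    have hdiv : (k : ℝ) - 1 ≤ 2 * Real.sqrt N / Real.log 2 := by
      rw [le_div_iff₀ hlog2]
      linarith
    linarith

lemma thin_triangle {X : Type} [MetricSpace X] {δ : ℝ} (hδ : 0 ≤ δ)
    (hX : GromovHyperbolic X δ) (x y z : X) (γ γ₁ γ₂ : ℝ → X)
    (h0 : γ 0 = x) (h1 : γ (dist x y) = y) (hg : IsGeodesicParam γ 0 (dist x y))
    (h10 : γ₁ 0 = x) (h11 : γ₁ (dist x z) = z) (hg1 : IsGeodesicParam γ₁ 0 (dist x z))
    (h20 : γ₂ 0 = z) (h21 : γ₂ (dist z y) = y) (hg2 : IsGeodesicParam γ₂ 0 (dist z y))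
    (t : ℝ) (ht : t ∈ Set.Icc 0 (dist x y)) :
    (∃ s ∈ Set.Icc (0:ℝ) (dist x z), dist (γ t) (γ₁ s) ≤ 4*δ) ∨
    (∃ s ∈ Set.Icc (0:ℝ) (dist z y), dist (γ t) (γ₂ s) ≤ 4*δ) := by
  obtain ⟨ht0, ht1⟩ := ht
  have htmem : t ∈ Set.Icc (0:ℝ) (dist x y) := ⟨ht0, ht1⟩
  have hxy0 : (0:ℝ) ∈ Set.Icc 0 (dist x y) := ⟨le_refl _, dist_nonneg⟩
  have hxyd : dist x y ∈ Set.Icc (0:ℝ) (dist x y) := ⟨dist_nonneg, le_refl _⟩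
  have hxm : dist x (γ t) = t := by
    have h' := hg 0 hxy0 t htmem
    rw [h0] at h'
    rw [h', zero_sub, abs_neg, abs_of_nonneg ht0]
  have hmy : dist (γ t) y = dist x y - t := by
    have h' := hg t htmem (dist x y) hxyd
    rw [h1] at h'
    rw [h', abs_of_nonpos (by linarith), neg_sub]
  have htri := dist_triangle x z y
  have H1 := hX z x (γ t) y
  by_cases hcase : t ≤ (dist x y + dist x z - dist z y)/2
  · have hzm : dist z (γ t) ≤ dist x z - t + 2*δ := by
      have hmax : max (dist z x + dist (γ t) y) (dist z y + dist x (γ t))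
          ≤ dist x z + dist x y - t :=
        max_le (by rw [dist_comm z x, hmy]; linarith) (by rw [hxm]; linarith)
      linarith
    have htz : t ≤ dist x z := by linarith
    have hsmem : t ∈ Set.Icc (0:ℝ) (dist x z) := ⟨ht0, htz⟩
    have hxz0 : (0:ℝ) ∈ Set.Icc 0 (dist x z) := ⟨le_refl _, dist_nonneg⟩
    have hxzd : dist x z ∈ Set.Icc (0:ℝ) (dist x z) := ⟨dist_nonneg, le_refl _⟩
    have hxm' : dist x (γ₁ t) = t := by
      have h' := hg1 0 hxz0 t hsmem
      rw [h10] at h'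
      rw [h', zero_sub, abs_neg, abs_of_nonneg ht0]
    have hm'z : dist (γ₁ t) z = dist x z - t := by
      have h' := hg1 t hsmem (dist x z) hxzd
      rw [h11] at h'
      rw [h', abs_of_nonpos (by linarith), neg_sub]
    refine Or.inl ⟨t, hsmem, ?_⟩
    have H2 := hX (γ t) x (γ₁ t) z
    have hc1 : dist (γ t) x = t := by rw [dist_comm]; exact hxm
    have hc2 : dist (γ t) z = dist z (γ t) := dist_comm _ _
    have hmax : max (dist (γ t) x + dist (γ₁ t) z) (dist (γ t) z + dist x (γ₁ t))
        ≤ dist x z + 2*δ :=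
      max_le (by rw [hc1, hm'z]; linarith) (by rw [hc2, hxm']; linarith)
    linarith
  · push_neg at hcase
    set s := dist z y - (dist x y - t) with hs
    have hs0 : 0 ≤ s := by rw [hs]; linarith
    have hsmem : s ∈ Set.Icc (0:ℝ) (dist z y) := ⟨hs0, by rw [hs]; linarith⟩
    have hzy0 : (0:ℝ) ∈ Set.Icc 0 (dist z y) := ⟨le_refl _, dist_nonneg⟩
    have hzyd : dist z y ∈ Set.Icc (0:ℝ) (dist z y) := ⟨dist_nonneg, le_refl _⟩
    have hzm' : dist z (γ₂ s) = s := by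
      have h' := hg2 0 hzy0 s hsmem
      rw [h20] at h'
      rw [h', zero_sub, abs_neg, abs_of_nonneg hs0]
    have hm'y : dist (γ₂ s) y = dist z y - s := by
      have h' := hg2 s hsmem (dist z y) hzyd
      rw [h21] at h'
      rw [h', abs_of_nonpos (by linarith [hsmem.2]), neg_sub]
    have hzm : dist z (γ t) ≤ s + 2*δ := by
      have hmax : max (dist z x + dist (γ t) y) (dist z y + dist x (γ t))
          ≤ dist z y + t :=
        max_le (by rw [dist_comm z x, hmy]; linarith) (by rw [hxm])
      rw [hs]
      linarith
    refine Or.inr ⟨s, hsmem, ?_⟩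
    have H3 := hX (γ t) y (γ₂ s) z
    have hc1 : dist y z = dist z y := dist_comm _ _
    have hc2 : dist (γ₂ s) z = dist z (γ₂ s) := dist_comm _ _
    have hc3 : dist (γ t) z = dist z (γ t) := dist_comm _ _
    have hc4 : dist y (γ₂ s) = dist (γ₂ s) y := dist_comm _ _
    have hmax : max (dist (γ t) y + dist (γ₂ s) z) (dist (γ t) z + dist y (γ₂ s))
        ≤ dist z y + 2*δ :=
      max_le (by rw [hmy, hc2, hzm']; rw [hs]; linarith)
        (by rw [hc3, hc4, hm'y]; linarith)
    rw [hc1] at H3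
    linarith

lemma chain_lemma {X : Type} [MetricSpace X] {δ c : ℝ} (hδ : 0 ≤ δ)
    (hgeo : GeodesicSpace X) (hX : GromovHyperbolic X δ) :
    ∀ N : ℕ, 1 ≤ N → ∀ w : ℕ → X, (∀ i < N, dist (w i) (w (i+1)) ≤ c) →
    ∀ γ : ℝ → X, γ 0 = w 0 → γ (dist (w 0) (w N)) = w N →
    IsGeodesicParam γ 0 (dist (w 0) (w N)) →
    ∀ u ∈ Set.Icc (0:ℝ) (dist (w 0) (w N)),
    ∃ i ≤ N, dist (γ u) (w i) ≤ 4*δ*(Nat.clog 2 N) + c := by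
  intro N
  induction N using Nat.strong_induction_on with
  | _ N IH =>
  intro hN1 w hw γ hγ0 hγ1 hγg u hu
  rcases eq_or_lt_of_le hN1 with rfl | hN2
  · refine ⟨0, by omega, ?_⟩
    have h' := hγg 0 ⟨le_refl _, dist_nonneg⟩ u hu
    rw [hγ0, zero_sub, abs_neg, abs_of_nonneg hu.1] at h'
    rw [dist_comm] at h'
    have hb := hw 0 (by omega)
    have hu2 := hu.2
    simp only [Nat.clog_one_right, Nat.cast_zero, mul_zero, zero_add]
    rw [h']
    linarith
  · set k := (N+1)/2 with hk
    have hk1 : 1 ≤ k := by omega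
    have hkN : k < N := by omega
    have hn2 : 1 ≤ N - k := by omega
    have hn2N : N - k < N := by omega
    have hclogk : Nat.clog 2 k + 1 ≤ Nat.clog 2 N := by
      rw [Nat.clog_of_two_le (by norm_num) hN2]
      have he : (N + 2 - 1)/2 = k := by omega
      rw [he]
    have hclogn2 : Nat.clog 2 (N-k) + 1 ≤ Nat.clog 2 N :=
      le_trans (by have := Nat.clog_mono_right 2 (show N - k ≤ k by omega); omega) hclogk
    obtain ⟨γ₁, hγ₁0, hγ₁1, hγ₁g⟩ := hgeo (w 0) (w k)
    obtain ⟨γ₂, hγ₂0, hγ₂1, hγ₂g⟩ := hgeo (w k) (w N)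
    rcases thin_triangle hδ hX (w 0) (w N) (w k) γ γ₁ γ₂ hγ0 hγ1 hγg hγ₁0 hγ₁1 hγ₁g
        hγ₂0 hγ₂1 hγ₂g u hu with ⟨s, hs, hds⟩ | ⟨s, hs, hds⟩
    · obtain ⟨i, hik, hdi⟩ := IH k hkN hk1 w (fun i hi => hw i (by omega)) γ₁ hγ₁0 hγ₁1 hγ₁g s hs
      refine ⟨i, by omega, ?_⟩
      have hmono : (Nat.clog 2 k : ℝ) + 1 ≤ (Nat.clog 2 N : ℝ) := by exact_mod_cast hclogk
      calc dist (γ u) (w i) ≤ dist (γ u) (γ₁ s) + dist (γ₁ s) (w i) := dist_triangle _ _ _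
        _ ≤ 4*δ + (4*δ*(Nat.clog 2 k) + c) := by linarith
        _ ≤ 4*δ*(Nat.clog 2 N) + c := by nlinarith
    · set w' : ℕ → X := fun i => w (k + i) with hw'
      have hw'0 : w' 0 = w k := rfl
      have hw'N : w' (N - k) = w N := by
        show w (k + (N - k)) = w N
        rw [Nat.add_sub_cancel' hkN.le]
      obtain ⟨i, hik, hdi⟩ := IH (N - k) hn2N hn2 w' (fun i hi => hw (k+i) (by omega)) γ₂
        (by rw [hw'0]; exact hγ₂0) (by rw [hw'0, hw'N]; exact hγ₂1)
        (by rw [hw'0, hw'N]; exact hγ₂g) s (by rw [hw'0, hw'N]; exact hs)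
      refine ⟨k + i, by omega, ?_⟩
      have hmono : (Nat.clog 2 (N-k) : ℝ) + 1 ≤ (Nat.clog 2 N : ℝ) := by exact_mod_cast hclogn2
      calc dist (γ u) (w (k+i)) ≤ dist (γ u) (γ₂ s) + dist (γ₂ s) (w (k+i)) :=
            dist_triangle _ _ _
        _ ≤ 4*δ + (4*δ*(Nat.clog 2 (N-k)) + c) := by
            have heq : dist (γ₂ s) (w' i) = dist (γ₂ s) (w (k+i)) := rfl
            linarith [heq ▸ hdi]
        _ ≤ 4*δ*(Nat.clog 2 N) + c := by nlinarith

set_option maxHeartbeats 1000000 in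
lemma main_aux {X : Type} [MetricSpace X] {δ l ε : ℝ} (hδ : 0 ≤ δ) (hl : 1 ≤ l) (hε : 0 ≤ ε)
    (hgeo : GeodesicSpace X) (hX : GromovHyperbolic X δ)
    (α : ℝ → X) (a b : ℝ) (hq : IsQuasiGeodesic l ε α a b)
    (p₂ p₃ z : X) (s₂ s₃ : ℝ) (hs₂ : s₂ ∈ Set.Icc a b) (hs₃ : s₃ ∈ Set.Icc a b)
    (hss : s₂ ≤ s₃) (h2z : dist p₂ z ≤ δ) (h3z : dist p₃ z ≤ δ)
    (hproj2 : dist p₂ (α s₂) = Metric.infDist p₂ (α '' Set.Icc a b))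
    (hproj3 : dist p₃ (α s₃) = Metric.infDist p₃ (α '' Set.Icc a b)) :
    dist (α s₂) (α s₃) ≤ (20*δ + 2*l + 2*ε) +
      (16*δ/Real.log 2 * Real.sqrt (l*(ε+1))) * Real.sqrt (dist (α s₂) (α s₃) + 1) := by
  have hl0 : 0 < l := by linarith
  have hlog2 : 0 < Real.log 2 := Real.log_pos (by norm_num)
  set T := s₃ - s₂ with hT
  have hT0 : 0 ≤ T := by rw [hT]; linarith
  rcases eq_or_lt_of_le hT0 with hT0' | hTpos
  · have hs23 : s₂ = s₃ := by rw [hT] at hT0'; linarith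
    rw [hs23, dist_self]
    positivity
  · set N := Nat.ceil T with hN
    have hN1 : 1 ≤ N := Nat.one_le_ceil_iff.mpr hTpos
    have hN0R : (0:ℝ) < N := by exact_mod_cast hN1
    have hTN : T ≤ N := Nat.le_ceil T
    have hNT1 : (N:ℝ) < T + 1 := Nat.ceil_lt_add_one hT0
    set h := T / N with hhdef
    have hh0 : 0 < h := div_pos hTpos hN0R
    have hh1 : h ≤ 1 := by rw [hhdef, div_le_one hN0R]; exact hTN
    have hNh : (N:ℝ) * h = T := by
      rw [hhdef]
      field_simp
    set w : ℕ → X := fun i => α (s₂ + i * h) with hwdef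
    have hpar : ∀ i : ℕ, i ≤ N → s₂ + i * h ∈ Set.Icc a b := by
      intro i hi
      have hiR : (i:ℝ) ≤ N := by exact_mod_cast hi
      have hih : (i:ℝ) * h ≤ (N:ℝ) * h := mul_le_mul_of_nonneg_right hiR hh0.le
      have hih0 : 0 ≤ (i:ℝ) * h := by positivity
      constructor
      · linarith [hs₂.1]
      · have hle : s₂ + (i:ℝ)*h ≤ s₃ := by linarith [hNh, hT]
        linarith [hs₃.2]
    have hw0 : w 0 = α s₂ := by simp [hwdef]
    have hwN : w N = α s₃ := by
      simp only [hwdef]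
      congr 1
      linarith [hNh, hT]
    have hstep : ∀ i, i < N → dist (w i) (w (i+1)) ≤ l + ε := by
      intro i hi
      have h1m := hpar i hi.le
      have h2m := hpar (i+1) hi
      have key := (hq (s₂ + i*h) h1m (s₂ + ((i+1:ℕ):ℝ)*h) h2m).2
      have e : s₂ + (i:ℝ)*h - (s₂ + ((i+1:ℕ):ℝ)*h) = -h := by push_cast; ring
      rw [e, abs_neg, abs_of_nonneg hh0.le] at key
      have hwi : w i = α (s₂ + i*h) := rfl
      have hwi1 : w (i+1) = α (s₂ + ((i+1:ℕ):ℝ)*h) := rfl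
      rw [hwi, hwi1]
      nlinarith
    obtain ⟨γ, hγ0, hγ1, hγg⟩ := hgeo (α s₂) (α s₃)
    set D := dist (α s₂) (α s₃) with hD
    have hD0 : 0 ≤ D := dist_nonneg
    have hmem : D/2 ∈ Set.Icc (0:ℝ) D := ⟨by linarith, by linarith⟩
    obtain ⟨i, hiN, hmi⟩ := chain_lemma hδ hgeo hX N hN1 w hstep γ
      (by rw [hw0]; exact hγ0) (by rw [hw0, hwN]; exact hγ1)
      (by rw [hw0, hwN]; exact hγg) (D/2) (by rw [hw0, hwN]; exact hmem)
    have hq2m : dist (α s₂) (γ (D/2)) = D/2 := by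
      have h' := hγg 0 ⟨le_refl _, hD0⟩ (D/2) hmem
      rw [hγ0] at h'
      rw [h', zero_sub, abs_neg, abs_of_nonneg (by linarith)]
    have hmq3 : dist (γ (D/2)) (α s₃) = D - D/2 := by
      have h' := hγg (D/2) hmem D ⟨hD0, le_refl _⟩
      rw [hγ1] at h'
      rw [h', abs_of_nonpos (by linarith), neg_sub]
    have hwiS : w i ∈ α '' Set.Icc a b := ⟨s₂ + i*h, hpar i hiN, rfl⟩
    have hq2S : α s₂ ∈ α '' Set.Icc a b := ⟨s₂, hs₂, rfl⟩
    have hr2 : dist p₂ (α s₂) ≤ dist p₂ (w i) := by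
      rw [hproj2]; exact Metric.infDist_le_dist_of_mem hwiS
    have hr3 : dist p₃ (α s₃) ≤ dist p₃ (α s₂) := by
      rw [hproj3]; exact Metric.infDist_le_dist_of_mem hq2S
    have h23 : dist p₂ p₃ ≤ 2*δ := by
      have ht := dist_triangle p₂ z p₃
      have hc : dist z p₃ = dist p₃ z := dist_comm _ _
      linarith
    have hp2q3 : dist p₂ (α s₃) ≤ 4*δ + dist p₂ (α s₂) := by
      have t1 := dist_triangle p₂ p₃ (α s₃)
      have t2 := dist_triangle p₃ p₂ (α s₂)
      have hc : dist p₃ p₂ = dist p₂ p₃ := dist_comm _ _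
      linarith
    have H := hX p₂ (α s₂) (γ (D/2)) (α s₃)
    have hmax : max (dist p₂ (α s₂) + dist (γ (D/2)) (α s₃))
        (dist p₂ (α s₃) + dist (α s₂) (γ (D/2))) ≤ dist p₂ (α s₂) + 4*δ + D/2 :=
      max_le (by rw [hmq3]; linarith) (by rw [hq2m]; linarith)
    have hp2m : dist p₂ (γ (D/2)) ≤ dist p₂ (α s₂) + 6*δ - D/2 := by
      rw [← hD] at H
      linarith
    have hKey : D ≤ 12*δ + 8*δ*(Nat.clog 2 N : ℝ) + 2*(l+ε) := by
      have htr := dist_triangle p₂ (γ (D/2)) (w i)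
      linarith
    have hclog := clog_real_bound N hN1
    have hlow := (hq s₂ hs₂ s₃ hs₃).1
    have habs : |s₂ - s₃| = T := by
      rw [abs_sub_comm, abs_of_nonneg hT0]
    rw [habs, ← hD] at hlow
    have hTl : T ≤ l*(D + ε) := by
      have hmul := mul_le_mul_of_nonneg_left hlow hl0.le
      have e : l*(1/l*T - ε) = T - l*ε := by
        field_simp
      rw [e] at hmul
      linarith
    have hNle : (N:ℝ) ≤ l*(ε+1)*(D+1) := by
      have hprod : 0 ≤ l*ε*D := by positivity
      have hexp : l*(ε+1)*(D+1) = l*ε*D + l*(D+ε) + l := by ring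
      linarith
    have hsqN : Real.sqrt N ≤ Real.sqrt (l*(ε+1)) * Real.sqrt (D+1) := by
      rw [← Real.sqrt_mul (by positivity) (D+1)]
      exact Real.sqrt_le_sqrt hNle
    have hBnn : (0:ℝ) ≤ 16*δ/Real.log 2 := by positivity
    have h8 : 8*δ*(Nat.clog 2 N : ℝ) ≤ 16*δ/Real.log 2 * Real.sqrt N + 8*δ := by
      have h2 : 8*δ*(Nat.clog 2 N:ℝ) ≤ 8*δ*(2*Real.sqrt N/Real.log 2 + 1) := by nlinarith
      have h3 : 8*δ*(2*Real.sqrt N/Real.log 2) = 16*δ/Real.log 2 * Real.sqrt N := by ring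
      linarith
    have h9 : 16*δ/Real.log 2 * Real.sqrt N
        ≤ 16*δ/Real.log 2 * (Real.sqrt (l*(ε+1)) * Real.sqrt (D+1)) :=
      mul_le_mul_of_nonneg_left hsqN hBnn
    have h10 : 16*δ/Real.log 2 * (Real.sqrt (l*(ε+1)) * Real.sqrt (D+1))
        = (16*δ/Real.log 2 * Real.sqrt (l*(ε+1))) * Real.sqrt (D+1) := by ring
    linarith

/-- If `p₂, p₃` lie within `δ` of a common point `z` in a `δ`-hyperbolic geodesic space,
then any nearest-point projections `q₂, q₃` of `p₂, p₃` to the image of a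
`(l, ε)`-quasigeodesic `α` are within a distance of each other bounded by a constant
depending only on `δ`, `l`, `ε`. -/
theorem stmt_0 (δ l ε : ℝ) (hδ : 0 ≤ δ) (hl : 1 ≤ l) (hε : 0 ≤ ε) :
    ∃ C : ℝ, ∀ (X : Type) [inst : MetricSpace X], GeodesicSpace X → GromovHyperbolic X δ →
      ∀ (α : ℝ → X) (a b : ℝ), IsQuasiGeodesic l ε α a b →
      ∀ p₂ p₃ z q₂ q₃ : X, dist p₂ z ≤ δ → dist p₃ z ≤ δ →
        q₂ ∈ α '' Set.Icc a b → q₃ ∈ α '' Set.Icc a b →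
        dist p₂ q₂ = Metric.infDist p₂ (α '' Set.Icc a b) →
        dist p₃ q₃ = Metric.infDist p₃ (α '' Set.Icc a b) →
        dist q₂ q₃ ≤ C := by
  have hlog2 : 0 < Real.log 2 := Real.log_pos (by norm_num)
  set A := 20*δ + 2*l + 2*ε with hA
  set B := 16*δ/Real.log 2 * Real.sqrt (l*(ε+1)) with hB
  have hA0 : 0 ≤ A := by rw [hA]; linarith
  have hB0 : 0 ≤ B := by rw [hB]; positivity
  refine ⟨(B + Real.sqrt (A+1))^2, ?_⟩
  intro X inst hgeo hX α a b hq p₂ p₃ z q₂ q₃ h2z h3z hq2 hq3 hproj2 hproj3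
  obtain ⟨s₂, hs₂, rfl⟩ := hq2
  obtain ⟨s₃, hs₃, rfl⟩ := hq3
  rcases le_total s₂ s₃ with hss | hss
  · exact sqrt_bound hA0 hB0 dist_nonneg
      (main_aux hδ hl hε hgeo hX α a b hq p₂ p₃ z s₂ s₃ hs₂ hs₃ hss h2z h3z hproj2 hproj3)
  · rw [dist_comm]
    exact sqrt_bound hA0 hB0 dist_nonneg
      (main_aux hδ hl hε hgeo hX α a b hq p₃ p₂ z s₃ s₂ hs₃ hs₂ hss h3z h2z hproj3 hproj2)
end

section
/- Let X be a δ-hyperbolic geodesic metric space, let γ be a geodesic in X from x to y, and let A ⊆ X be a C-quasiconvex subset. Suppose u and v are points on γ lying in A, and let β be any geodesic in X from u to v. Then the path obtained from γ by replacing its subsegment between u and v with β is a (K,ε)-quasigeodesic in X, for constants K, ε depending only on δ and C. -/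
/-- `A` is a `C`-quasiconvex subset: every geodesic with endpoints in `A` stays in the
`C`-neighborhood of `A`. -/
def QuasiconvexSubset {X : Type*} [MetricSpace X] (C : ℝ) (A : Set X) : Prop :=
  ∀ (γ : ℝ → X) (a b : ℝ), IsGeodesicParam γ a b → γ a ∈ A → γ b ∈ A →
    ∀ t ∈ Set.Icc a b, Metric.infDist (γ t) A ≤ C

/-- Key four-point estimate: if `x` lies "beyond `m₁`" on a geodesic through `m₁, m₂`
and `y` lies on a geodesic from `m₁` to `m₂`, then `dist x y ≥ a + b - 2δ`. -/
lemma core_aux {X : Type} [MetricSpace X] {δ : ℝ} (hyp : GromovHyperbolic X δ)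
    (x y m₁ m₂ : X) (a b D : ℝ)
    (h1 : dist x m₁ = a) (h2 : dist x m₂ = a + D) (h3 : dist y m₁ = b)
    (h4 : dist y m₂ = D - b) (h5 : dist m₂ m₁ = D) :
    a + b - 2 * δ ≤ dist x y := by
  have H := hyp x y m₂ m₁
  have t1 : dist x m₁ ≤ dist x y + dist y m₁ := dist_triangle x y m₁
  rcases max_cases (dist x y + dist m₂ m₁) (dist x m₁ + dist y m₂) with ⟨he, _⟩ | ⟨he, _⟩ <;>
    rw [he] at H <;> linarith

/-- Replacing the subsegment of a geodesic `γ` between two points `u = γ s₁`, `v = γ s₂`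
lying on a `C`-quasiconvex set `A` by any geodesic `β` from `u` to `v` yields a
`(K, ε)`-quasigeodesic, with `K`, `ε` depending only on `δ` and `C`. -/
theorem stmt_2 (δ C : ℝ) (hδ : 0 ≤ δ) (hC : 0 ≤ C) :
    ∃ K ε : ℝ, 1 ≤ K ∧ 0 ≤ ε ∧
      ∀ (X : Type) [inst : MetricSpace X], GeodesicSpace X → GromovHyperbolic X δ →
      ∀ (A : Set X) (γ : ℝ → X) (L s₁ s₂ : ℝ) (β : ℝ → X),
        QuasiconvexSubset C A →
        IsGeodesicParam γ 0 L → 0 ≤ s₁ → s₁ ≤ s₂ → s₂ ≤ L →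
        γ s₁ ∈ A → γ s₂ ∈ A →
        IsGeodesicParam β 0 (dist (γ s₁) (γ s₂)) →
        β 0 = γ s₁ → β (dist (γ s₁) (γ s₂)) = γ s₂ →
        IsQuasiGeodesic K ε
          (fun s => if s ≤ s₁ then γ s
            else if s ≤ s₁ + dist (γ s₁) (γ s₂) then β (s - s₁)
            else γ (s₂ + (s - s₁ - dist (γ s₁) (γ s₂))))
          0 (s₁ + dist (γ s₁) (γ s₂) + (L - s₂)) := by
  refine ⟨1, 2 * δ, le_refl 1, by linarith, ?_⟩
  intro X inst _hgeo hyp A γ L s₁ s₂ β _hqc hγ hs₁ hs₁₂ hs₂ _hA₁ _hA₂ hβ hβ0 hβD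
  set f : ℝ → X := fun s => if s ≤ s₁ then γ s
      else if s ≤ s₁ + dist (γ s₁) (γ s₂) then β (s - s₁)
      else γ (s₂ + (s - s₁ - dist (γ s₁) (γ s₂))) with hf
  have h0L : (0:ℝ) ≤ L := le_trans hs₁ (le_trans hs₁₂ hs₂)
  have hs₁L : s₁ ≤ L := le_trans hs₁₂ hs₂
  have hs₂0 : (0:ℝ) ≤ s₂ := le_trans hs₁ hs₁₂
  have hD : dist (γ s₁) (γ s₂) = s₂ - s₁ := by
    rw [hγ s₁ ⟨hs₁, hs₁L⟩ s₂ ⟨hs₂0, hs₂⟩, abs_of_nonpos (by linarith)]; ring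
  have hdγ : ∀ a b, 0 ≤ a → a ≤ b → b ≤ L → dist (γ a) (γ b) = b - a := by
    intro a b ha hab hb
    rw [hγ a ⟨ha, le_trans hab hb⟩ b ⟨le_trans ha hab, hb⟩, abs_of_nonpos (by linarith)]; ring
  have hdβ : ∀ a b, 0 ≤ a → a ≤ b → b ≤ s₂ - s₁ → dist (β a) (β b) = b - a := by
    intro a b ha hab hb
    rw [hβ a ⟨ha, by rw [hD]; linarith⟩ b ⟨le_trans ha hab, by rw [hD]; linarith⟩,
      abs_of_nonpos (by linarith)]; ring
  -- values of f
  have hfγ : ∀ u, (u ≤ s₁ ∨ s₂ ≤ u) → f u = γ u := by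
    intro u hu
    rcases le_or_gt u s₁ with h | h
    · simp [hf, h]
    · have hu2 : s₂ ≤ u := hu.resolve_left (not_le.2 h)
      rw [hf]
      simp only [if_neg (not_le.2 h)]
      by_cases h2 : u ≤ s₁ + dist (γ s₁) (γ s₂)
      · rw [if_pos h2]
        have : u = s₂ := le_antisymm (by rw [hD] at h2; linarith) hu2
        rw [this, show s₂ - s₁ = dist (γ s₁) (γ s₂) by rw [hD], hβD]
      · rw [if_neg h2]
        congr 1
        rw [hD]; ring
  have hfβ : ∀ u, s₁ ≤ u → u ≤ s₂ → f u = β (u - s₁) := by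
    intro u h1 h2
    rcases le_or_gt u s₁ with h | h
    · have hu : u = s₁ := le_antisymm h h1
      subst hu; rw [hf]; simp [hβ0]
    · rw [hf]
      simp only [if_neg (not_le.2 h), if_pos (by rw [hD]; linarith :
        u ≤ s₁ + dist (γ s₁) (γ s₂))]
  -- the key two-sided estimate for ordered parameters
  have key : ∀ s t, 0 ≤ s → s ≤ t → t ≤ L →
      (t - s) - 2 * δ ≤ dist (f s) (f t) ∧ dist (f s) (f t) ≤ t - s := by
    intro s t hs0 hst htL
    have ht0 : (0:ℝ) ≤ t := le_trans hs0 hst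
    have hsL : s ≤ L := le_trans hst htL
    rcases le_or_gt t s₁ with h1 | h1
    · -- both on left γ part
      rw [hfγ s (Or.inl (le_trans hst h1)), hfγ t (Or.inl h1), hdγ s t hs0 hst htL]
      constructor <;> linarith
    · rcases le_or_gt t s₂ with h2 | h2
      · rcases le_or_gt s s₁ with h3 | h3
        · -- s on left γ, t on β
          rw [hfγ s (Or.inl h3), hfβ t (le_of_lt h1) h2]
          have hlow : (s₁ - s) + (t - s₁) - 2 * δ ≤ dist (γ s) (β (t - s₁)) := by
            refine core_aux hyp (γ s) (β (t - s₁)) (γ s₁) (γ s₂) (s₁ - s) (t - s₁)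
              (s₂ - s₁) ?_ ?_ ?_ ?_ ?_
            · exact hdγ s s₁ hs0 h3 hs₁L
            · rw [hdγ s s₂ hs0 (le_trans h3 hs₁₂) hs₂]; ring
            · rw [dist_comm, ← hβ0, hdβ 0 (t - s₁) le_rfl (by linarith) (by linarith)]; ring
            · rw [dist_comm, ← hβD, hD, dist_comm,
                hdβ (t - s₁) (s₂ - s₁) (by linarith) (by linarith) le_rfl]
            · rw [dist_comm, hD]
          have hup : dist (γ s) (β (t - s₁)) ≤ (s₁ - s) + (t - s₁) := by
            calc dist (γ s) (β (t - s₁)) ≤ dist (γ s) (γ s₁) + dist (γ s₁) (β (t - s₁)) :=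
                  dist_triangle _ _ _
              _ = (s₁ - s) + (t - s₁) := by
                  rw [hdγ s s₁ hs0 h3 hs₁L, ← hβ0,
                    hdβ 0 (t - s₁) le_rfl (by linarith) (by linarith)]; ring
          constructor <;> linarith
        · -- both on β
          rw [hfβ s (le_of_lt h3) (le_trans hst h2), hfβ t (le_of_lt h1) h2,
            hdβ (s - s₁) (t - s₁) (by linarith) (by linarith) (by linarith)]
          constructor <;> linarith
      · rcases le_or_gt s s₁ with h3 | h3
        · -- s on left γ, t on right γ
          rw [hfγ s (Or.inl h3), hfγ t (Or.inr (le_of_lt h2)), hdγ s t hs0 hst htL]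
          constructor <;> linarith
        · rcases le_or_gt s s₂ with h4 | h4
          · -- s on β, t on right γ
            rw [hfβ s (le_of_lt h3) h4, hfγ t (Or.inr (le_of_lt h2))]
            have hlow : (t - s₂) + (s₂ - s) - 2 * δ ≤ dist (γ t) (β (s - s₁)) := by
              refine core_aux hyp (γ t) (β (s - s₁)) (γ s₂) (γ s₁) (t - s₂) (s₂ - s)
                (s₂ - s₁) ?_ ?_ ?_ ?_ ?_
              · rw [dist_comm]; exact hdγ s₂ t hs₂0 (le_of_lt h2) htL
              · rw [dist_comm, hdγ s₁ t hs₁ (by linarith) htL]; ring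
              · rw [dist_comm, ← hβD, hD, dist_comm,
                  hdβ (s - s₁) (s₂ - s₁) (by linarith) (by linarith) le_rfl]; ring
              · rw [dist_comm, ← hβ0, hdβ 0 (s - s₁) le_rfl (by linarith) (by linarith)]
                ring
              · exact hdγ s₁ s₂ hs₁ hs₁₂ hs₂
            have hup : dist (β (s - s₁)) (γ t) ≤ (s₂ - s) + (t - s₂) := by
              have e1 : dist (β (s - s₁)) (γ s₂) = s₂ - s := by
                conv_lhs => rw [← hβD]
                rw [hD, hdβ (s - s₁) (s₂ - s₁) (by linarith) (by linarith) le_rfl]; ring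
              have e2 : dist (γ s₂) (γ t) = t - s₂ := hdγ s₂ t hs₂0 (le_of_lt h2) htL
              have := dist_triangle (β (s - s₁)) (γ s₂) (γ t)
              linarith
            rw [dist_comm] at hlow
            constructor <;> linarith
          · -- both on right γ
            rw [hfγ s (Or.inr (le_of_lt h4)), hfγ t (Or.inr (le_of_lt h2)),
              hdγ s t hs0 hst htL]
            constructor <;> linarith
  -- assemble
  have hend : s₁ + dist (γ s₁) (γ s₂) + (L - s₂) = L := by rw [hD]; ring
  intro s hs t ht
  rw [hend] at hs ht
  rcases le_total s t with h | h
  · have habs : |s - t| = t - s := by rw [abs_sub_comm, abs_of_nonneg (by linarith)]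
    obtain ⟨hl, hu⟩ := key s t hs.1 h ht.2
    refine ⟨?_, ?_⟩ <;> rw [habs] <;> [skip; skip] <;> simp only [one_div, inv_one,
      one_mul] <;> linarith
  · have habs : |s - t| = s - t := abs_of_nonneg (by linarith)
    obtain ⟨hl, hu⟩ := key t s ht.1 h hs.2
    rw [dist_comm (f t) (f s)] at hl hu
    refine ⟨?_, ?_⟩ <;> rw [habs] <;> simp only [one_div, inv_one, one_mul] <;> linarith
end
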